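/- arXiv:2408.02028 — 5 statements merged into one kernel-verified Lean document; each statement's English description precedes it below -/
import Mathlib

section
/- For the k-dimensional product copula Π(u₁,…,u_k) = u₁u₂⋯u_k with k ≥ 1, the cumulative copula entropy equals ζ(Π) = k / 2^{k+1}, i.e., -∫_{[0,1]^k} (∏ᵢ uᵢ)·ln(∏ᵢ uᵢ) du = k/2^{k+1}. -/
/-!
Since `log ∏ uᵢ = ∑ log uᵢ`, the integrand splits as `∑ⱼ (uⱼ log uⱼ) ∏_{i ≠ j} uᵢ`. By Fubini each
summand integrates over the unit cube to `(∫₀¹ x log x) (∫₀¹ x)^(k-1) = -(1/4) (1/2)^(k-1)`, and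
the `k` summands add up to `-k / 2^(k+1)`.
-/

open MeasureTheory Real Set

theorem prod_ite_mul_log_eq {ι : Type*} [Fintype ι] [DecidableEq ι] (u : ι → ℝ) (j : ι) :
    (∏ i, if i = j then u i * log (u i) else u i) = (∏ i, u i) * log (u j) := by
  calc (∏ i, if i = j then u i * log (u i) else u i)
      = ∏ i, u i * if i = j then log (u i) else 1 :=
        Finset.prod_congr rfl fun i _ => by split_ifs <;> simp
    _ = (∏ i, u i) * log (u j) := by rw [Finset.prod_mul_distrib, Fintype.prod_ite_eq']

theorem prod_mul_log_prod_eq_sum {ι : Type*} [Fintype ι] [DecidableEq ι] (u : ι → ℝ) :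
    (∏ i, u i) * log (∏ i, u i) = ∑ j, ∏ i, if i = j then u i * log (u i) else u i := by
  simp_rw [prod_ite_mul_log_eq, ← Finset.mul_sum]
  by_cases h : ∏ i, u i = 0
  · simp [h]
  · rw [log_prod fun i _ => Finset.prod_ne_zero_iff.mp h i (Finset.mem_univ i)]

theorem setIntegral_univ_pi_prod {ι 𝕜 : Type*} [Fintype ι] [RCLike 𝕜] {E : ι → Type*}
    [∀ i, MeasureSpace (E i)] [∀ i, SigmaFinite (volume : Measure (E i))]
    (s : (i : ι) → Set (E i)) (f : (i : ι) → E i → 𝕜) :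
    ∫ u in univ.pi s, ∏ i, f i (u i) = ∏ i, ∫ x in s i, f i x := by
  rw [volume_pi, Measure.restrict_pi_pi, integral_fintype_prod_eq_prod]

theorem integral_mul_log_zero_one : ∫ x in (0 : ℝ)..1, x * log x = -1 / 4 := by
  have hderiv : ∀ x ∈ Ioo (0 : ℝ) 1,
      HasDerivAt (fun x => x / 2 * (x * log x) - x ^ 2 / 4) (x * log x) x := fun x hx =>
    ((((hasDerivAt_id' x).div_const 2).mul (hasDerivAt_mul_log hx.1.ne')).sub
      ((hasDerivAt_pow 2 x).div_const 4)).congr_deriv (by ring)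
  rw [intervalIntegral.integral_eq_sub_of_hasDerivAt_of_le zero_le_one
    (by fun_prop) hderiv (continuous_mul_log.intervalIntegrable 0 1)]
  norm_num

theorem setIntegral_Icc_zero_one_prod_ite_mul_log {ι : Type*} [Fintype ι] [DecidableEq ι]
    (j : ι) :
    ∫ u in Icc (0 : ι → ℝ) 1, ∏ i, (if i = j then u i * log (u i) else u i)
      = -(1 / 2) ^ Fintype.card ι / 2 := by
  rw [← pi_univ_Icc]
  simp only [Pi.zero_apply, Pi.one_apply]
  rw [setIntegral_univ_pi_prod (fun _ => Icc 0 1)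
    (fun i x => if i = j then x * log x else x)]
  calc (∏ i, ∫ x in Icc (0 : ℝ) 1, if i = j then x * log x else x)
      = ∏ i, (if i = j then (-1 / 2 : ℝ) else 1) * (1 / 2) := by
        refine Finset.prod_congr rfl fun i _ => ?_
        rw [integral_Icc_eq_integral_Ioc, ← intervalIntegral.integral_of_le zero_le_one]
        split_ifs
        · rw [integral_mul_log_zero_one]; norm_num
        · rw [integral_id]; norm_num
    _ = -(1 / 2) ^ Fintype.card ι / 2 := by
      rw [Finset.prod_mul_distrib, Fintype.prod_ite_eq', Finset.prod_const, Finset.card_univ]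
      ring

theorem stmt1_general (k : ℕ) :
    -∫ u in Set.Icc (0 : Fin k → ℝ) 1,
        (∏ i, u i) * Real.log (∏ i, u i) = (k : ℝ) / 2 ^ (k + 1) := by
  have hint (j : Fin k) : IntegrableOn
      (fun u : Fin k → ℝ => ∏ i, if i = j then u i * log (u i) else u i) (Icc 0 1) := by
    refine ContinuousOn.integrableOn_compact isCompact_Icc (Continuous.continuousOn ?_)
    refine continuous_finsetProd _ fun i _ => ?_
    split_ifs
    · exact continuous_mul_log.comp (continuous_apply i)
    · exact continuous_apply i
  simp_rw [prod_mul_log_prod_eq_sum]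
  rw [integral_finsetSum _ fun j _ => hint j]
  simp_rw [setIntegral_Icc_zero_one_prod_ite_mul_log]
  rw [Finset.sum_const, Finset.card_univ, Fintype.card_fin, nsmul_eq_mul, div_pow, one_pow]
  field_simp
  ring

/-- CCE of the k-dimensional product copula equals k / 2^(k+1). -/
theorem stmt1 (k : ℕ) (hk : 1 ≤ k) :
    -∫ u in Set.Icc (0 : Fin k → ℝ) 1,
        (∏ i, u i) * Real.log (∏ i, u i) = (k : ℝ) / 2 ^ (k + 1) :=
  stmt1_general k
end

section
/- For the k-dimensional minimum copula M(u) = min{u₁,…,u_k}, the cumulative copula entropy equals ζ(M) = k·∑_{x=0}^{k-1} C(k-1,x)·(-1)^x/(x+2)², where C(k-1,x) is a binomial coefficient. Equivalently, -∫_0^1 u·ln(u)·k(1-u)^{k-1} du = k·∑_{x=0}^{k-1} C(k-1,x)(-1)^x/(x+2)². -/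
/-!
The minimum of `k` independent uniform variables satisfies `P(min ≥ a) = (1 - a)ᵏ` on `[0, 1]`,
since `{u ∈ [0,1]ᵏ | a ≤ min u}` is the box `[a, 1]ᵏ`; hence it has density `k (1 - t)ᵏ⁻¹`
and the cube integral reduces to `-∫₀¹ t log t · k (1 - t)ᵏ⁻¹ dt`. Expanding `(1 - t)ᵏ⁻¹` by the
binomial theorem leaves the moments `∫₀¹ tˣ⁺¹ log t dt = -1 / (x + 2)²`.
-/

open MeasureTheory Real Set

theorem lintegral_Icc_mul_one_sub_pow {n : ℕ} (hn : n ≠ 0) {c : ℝ} :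
    ∫⁻ t in Icc c 1, ENNReal.ofReal (n * (1 - t) ^ (n - 1)) = ENNReal.ofReal (1 - c) ^ n := by
  rcases le_or_gt c 1 with hc1 | hc1
  · have hnn : ∀ t ∈ Icc c 1, 0 ≤ (n : ℝ) * (1 - t) ^ (n - 1) := fun t ht => by
      have : 0 ≤ 1 - t := by linarith [ht.2]
      positivity
    rw [← ofReal_integral_eq_lintegral_ofReal (Continuous.integrableOn_Icc (by fun_prop))
      ((ae_restrict_iff' measurableSet_Icc).2 (.of_forall hnn)), integral_Icc_eq_integral_Ioc,
      ← intervalIntegral.integral_of_le hc1, intervalIntegral.integral_const_mul,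
      intervalIntegral.integral_comp_sub_left (fun t => t ^ (n - 1)), integral_pow,
      ← ENNReal.ofReal_pow (by linarith)]
    congr 1
    obtain ⟨m, rfl⟩ := Nat.exists_eq_succ_of_ne_zero hn
    field_simp
    simp
  · rw [Icc_eq_empty_of_lt hc1, ENNReal.ofReal_eq_zero.2 (by linarith), zero_pow hn]
    simp

theorem map_iInf_volume_restrict_Icc {ι : Type*} [Fintype ι] [Nonempty ι] :
    (volume.restrict (Icc (0 : ι → ℝ) 1)).map (fun u => ⨅ i, u i)
      = (volume.restrict (Icc 0 1)).withDensity
          fun t => ENNReal.ofReal (Fintype.card ι * (1 - t) ^ (Fintype.card ι - 1)) := by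
  have hmin : Measurable fun u : ι → ℝ => ⨅ i, u i := .iInf fun i => measurable_pi_apply i
  have : IsFiniteMeasure (volume.restrict (Icc (0 : ι → ℝ) 1)) :=
    isFiniteMeasure_restrict.2 measure_Icc_lt_top.ne
  refine Measure.ext_of_Ici _ _ fun a => ?_
  have hinter : Ici a ∩ Icc 0 1 = Icc (max a 0) 1 := by
    ext; simp [and_assoc]
  have hpre : (fun u : ι → ℝ => ⨅ i, u i) ⁻¹' Ici a ∩ Icc 0 1
      = univ.pi fun _ => Icc (max a 0) 1 := by
    ext u
    simp only [mem_inter_iff, mem_preimage, mem_Ici,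
      le_ciInf_iff (Set.finite_range u).bddBelow, ← hinter, mem_univ_pi, Pi.le_def, mem_Icc,
      Pi.zero_apply, Pi.one_apply]
    grind
  rw [Measure.map_apply hmin measurableSet_Ici, Measure.restrict_apply (hmin measurableSet_Ici),
    hpre, volume_pi_pi, withDensity_apply _ measurableSet_Ici,
    Measure.restrict_restrict measurableSet_Ici, hinter,
    lintegral_Icc_mul_one_sub_pow Fintype.card_ne_zero]
  simp

theorem setIntegral_Icc_comp_iInf {ι : Type*} [Fintype ι] [Nonempty ι] {f : ℝ → ℝ}
    (hf : Measurable f) :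
    ∫ u in Icc (0 : ι → ℝ) 1, f (⨅ i, u i)
      = ∫ t in Icc 0 1, f t * (Fintype.card ι * (1 - t) ^ (Fintype.card ι - 1)) := by
  have hmin : Measurable fun u : ι → ℝ => ⨅ i, u i := .iInf fun i => measurable_pi_apply i
  rw [← integral_map hmin.aemeasurable hf.aestronglyMeasurable, map_iInf_volume_restrict_Icc,
    integral_withDensity_eq_integral_toReal_smul (by fun_prop)
      (.of_forall fun _ => ENNReal.ofReal_lt_top)]
  refine setIntegral_congr_fun measurableSet_Icc fun t ht => ?_
  have : 0 ≤ 1 - t := by linarith [ht.2]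
  rw [ENNReal.toReal_ofReal (by positivity), smul_eq_mul, mul_comm]

theorem integral_pow_succ_mul_log (n : ℕ) :
    ∫ x in (0 : ℝ)..1, x ^ (n + 1) * log x = -1 / ((n : ℝ) + 2) ^ 2 := by
  have hcont : ∀ m : ℕ, Continuous fun x : ℝ => x ^ (m + 1) * log x := fun m =>
    (by fun_prop : Continuous fun x : ℝ => x ^ m * (x * log x)).congr fun x => by ring
  rw [intervalIntegral.integral_eq_sub_of_hasDeriv_right_of_le zero_le_one
    (f := fun x => x ^ (n + 2) * log x / (n + 2) - x ^ (n + 2) / (n + 2) ^ 2)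
    (by fun_prop) _ ((hcont n).intervalIntegrable _ _)]
  · simp [field]
  · intro x hx
    have hpow : HasDerivAt (fun x : ℝ => x ^ (n + 2)) (((n : ℝ) + 2) * x ^ (n + 1)) x := by
      simpa using hasDerivAt_pow (n + 2) x
    have hx0 : x ≠ 0 := hx.1.ne'
    have := ((hpow.mul (hasDerivAt_log hx0)).div_const ((n : ℝ) + 2)).sub
      (hpow.div_const (((n : ℝ) + 2) ^ 2))
    refine (this.congr_deriv ?_).hasDerivWithinAt
    field_simp
    ring

theorem one_sub_pow_eq_sum (n : ℕ) (t : ℝ) :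
    (1 - t) ^ n = ∑ x ∈ Finset.range (n + 1), (n.choose x : ℝ) * (-1) ^ x * t ^ x := by
  rw [sub_eq_neg_add, add_pow]
  refine Finset.sum_congr rfl fun x _ => ?_
  rw [neg_pow]; ring

theorem integral_mul_log_mul_one_sub_pow (n : ℕ) :
    ∫ t in (0 : ℝ)..1, t * log t * (1 - t) ^ n
      = -∑ x ∈ Finset.range (n + 1), (n.choose x : ℝ) * (-1) ^ x / ((x : ℝ) + 2) ^ 2 := by
  simp_rw [one_sub_pow_eq_sum, Finset.mul_sum]
  rw [intervalIntegral.integral_finsetSum fun x _ => ?_]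
  · rw [← Finset.sum_neg_distrib]
    refine Finset.sum_congr rfl fun x _ => ?_
    rw [show (fun t : ℝ => t * log t * ((n.choose x : ℝ) * (-1) ^ x * t ^ x))
        = fun t => ((n.choose x : ℝ) * (-1) ^ x) * (t ^ (x + 1) * log t) by
      funext t; ring, intervalIntegral.integral_const_mul, integral_pow_succ_mul_log]
    ring
  · exact (continuous_mul_log.mul (by fun_prop)).intervalIntegrable _ _

theorem stmt3_general (k : ℕ) :
    (-∫ u in Set.Icc (0 : Fin k → ℝ) 1,
        (⨅ i, u i) * Real.log (⨅ i, u i)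
      = (k : ℝ) * ∑ x ∈ Finset.range k,
          ((k - 1).choose x : ℝ) * (-1) ^ x / ((x : ℝ) + 2) ^ 2) ∧
    (-∫ u in Set.Icc (0 : ℝ) 1,
        u * Real.log u * ((k : ℝ) * (1 - u) ^ (k - 1))
      = (k : ℝ) * ∑ x ∈ Finset.range k,
          ((k - 1).choose x : ℝ) * (-1) ^ x / ((x : ℝ) + 2) ^ 2) := by
  cases k with
  | zero => simp
  | succ n =>
    have h1d : -∫ u in Icc (0 : ℝ) 1, u * log u * (((n + 1 : ℕ) : ℝ) * (1 - u) ^ (n + 1 - 1))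
        = ((n + 1 : ℕ) : ℝ) * ∑ x ∈ Finset.range (n + 1),
          ((n + 1 - 1).choose x : ℝ) * (-1) ^ x / ((x : ℝ) + 2) ^ 2 := by
      rw [Nat.add_sub_cancel, integral_Icc_eq_integral_Ioc,
        ← intervalIntegral.integral_of_le zero_le_one]
      simp_rw [mul_left_comm _ (((n + 1 : ℕ) : ℝ))]
      rw [intervalIntegral.integral_const_mul, integral_mul_log_mul_one_sub_pow]
      ring
    refine ⟨?_, h1d⟩
    rw [setIntegral_Icc_comp_iInf (f := fun t => t * log t) (by fun_prop), Fintype.card_fin]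
    exact h1d

/-- CCE of the k-dimensional minimum copula:
both the cube integral and its one-dimensional reduction equal
k ∑_{x=0}^{k-1} C(k-1,x) (-1)^x/(x+2)². -/
theorem stmt3 (k : ℕ) (hk : 1 ≤ k) :
    (-∫ u in Set.Icc (0 : Fin k → ℝ) 1,
        (⨅ i, u i) * Real.log (⨅ i, u i)
      = (k : ℝ) * ∑ x ∈ Finset.range k,
          ((k - 1).choose x : ℝ) * (-1) ^ x / ((x : ℝ) + 2) ^ 2) ∧
    (-∫ u in Set.Icc (0 : ℝ) 1,
        u * Real.log u * ((k : ℝ) * (1 - u) ^ (k - 1))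
      = (k : ℝ) * ∑ x ∈ Finset.range k,
          ((k - 1).choose x : ℝ) * (-1) ^ x / ((x : ℝ) + 2) ^ 2) :=
  stmt3_general k
end

section
/- The derivative of the CCIGF at s = 1 equals minus the cumulative copula entropy: for any k-dimensional copula C, d/ds [∫_{[0,1]^k} C(u)^s du] evaluated at s = 1 equals ∫_{[0,1]^k} C(u) ln(C(u)) du = -ζ(C). -/
/-!
For `0 ≤ x ≤ 1` the map `s ↦ x ^ s` is differentiable on `s > 0` with derivative
`x ^ s * log x` (also at `x = 0`, where both vanish), and `|x ^ s * log x| ≤ 1 / a` uniformly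
for `s ≥ a > 0`. This constant bound is integrable on a finite measure space, so the derivative
may be taken under the integral sign.
-/

open MeasureTheory Real Filter Topology

namespace Real

theorem hasDerivAt_const_rpow_of_nonneg {x s : ℝ} (hx : 0 ≤ x) (hs : 0 < s) :
    HasDerivAt (fun t => x ^ t) (x ^ s * log x) s := by
  rcases hx.eq_or_lt with rfl | hx
  · have hzero : (fun t : ℝ => (0 : ℝ) ^ t) =ᶠ[𝓝 s] fun _ => 0 := by
      filter_upwards [eventually_gt_nhds hs] with t ht using zero_rpow ht.ne'
    simpa using (hasDerivAt_const s (0 : ℝ)).congr_of_eventuallyEq hzero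
  · exact (hasStrictDerivAt_const_rpow hx s).hasDerivAt

theorem abs_rpow_mul_log_le {x a s : ℝ} (hx₀ : 0 ≤ x) (hx₁ : x ≤ 1) (ha : 0 < a)
    (has : a ≤ s) :
    |x ^ s * log x| ≤ 1 / a := by
  rcases hx₀.eq_or_lt with rfl | hx₀
  · simp only [log_zero, mul_zero, abs_zero]
    positivity
  calc |x ^ s * log x| ≤ |log x * x ^ a| := by
        rw [mul_comm, abs_mul, abs_mul, abs_of_pos (rpow_pos_of_pos hx₀ s),
          abs_of_pos (rpow_pos_of_pos hx₀ a)]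
        exact mul_le_mul_of_nonneg_left (rpow_le_rpow_of_exponent_ge hx₀ hx₁ has)
          (abs_nonneg _)
    _ ≤ 1 / a := (abs_log_mul_self_rpow_lt x a hx₀ hx₁ ha).le

end Real

theorem hasDerivAt_integral_rpow {α : Type*} [MeasurableSpace α] {μ : Measure α}
    [IsFiniteMeasure μ] {f : α → ℝ} (hf : Measurable f) (hf01 : ∀ x, f x ∈ Set.Icc (0 : ℝ) 1)
    {s : ℝ} (hs : 0 < s) :
    HasDerivAt (fun t => ∫ x, f x ^ t ∂μ) (∫ x, f x ^ s * log (f x) ∂μ) s := by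
  have hmeas (t : ℝ) : Measurable fun x => f x ^ t := hf.pow_const t
  have hint : Integrable (fun x => f x ^ s) μ :=
    Integrable.of_bound (hmeas s).aestronglyMeasurable 1 <| ae_of_all _ fun x => by
      rw [norm_of_nonneg (rpow_nonneg (hf01 x).1 s)]
      exact rpow_le_one (hf01 x).1 (hf01 x).2 hs.le
  refine (hasDerivAt_integral_of_dominated_loc_of_deriv_le (F := fun t x => f x ^ t)
    (F' := fun t x => f x ^ t * log (f x)) (bound := fun _ => 1 / (s / 2))
    (Ioi_mem_nhds (half_lt_self hs)) (Eventually.of_forall fun t => (hmeas t).aestronglyMeasurable)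
    hint ((hmeas s).mul hf.log).aestronglyMeasurable ?_ (integrable_const _) ?_).2
  · exact ae_of_all _ fun x t ht =>
      abs_rpow_mul_log_le (hf01 x).1 (hf01 x).2 (half_pos hs) ht.le
  · exact ae_of_all _ fun x t ht =>
      hasDerivAt_const_rpow_of_nonneg (hf01 x).1 ((half_pos hs).trans ht)

/-- The derivative of the CCIGF at s = 1 equals minus the CCE:
d/ds ∫ C(u)^s du |_{s=1} = ∫ C(u) ln C(u) du. -/
theorem stmt9 (k : ℕ) (C : (Fin k → ℝ) → ℝ)
    (hCmeas : Measurable C)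
    (hC01 : ∀ u, C u ∈ Set.Icc (0 : ℝ) 1) :
    HasDerivAt (fun s : ℝ => ∫ u in Set.Icc (0 : Fin k → ℝ) 1, C u ^ s)
      (∫ u in Set.Icc (0 : Fin k → ℝ) 1, C u * Real.log (C u)) 1 := by
  have : IsFiniteMeasure (volume.restrict (Set.Icc (0 : Fin k → ℝ) 1)) :=
    isFiniteMeasure_restrict.2 isCompact_Icc.measure_lt_top.ne
  simpa only [rpow_one] using hasDerivAt_integral_rpow hCmeas hC01 one_pos
end

section
/- For the bivariate Fréchet–Hoeffding lower bound copula W(u₁,u₂) = max{u₁+u₂-1, 0}, the fractional cumulative copula entropy equals ζ_r(W) = Γ(r+1)·(2^{-(r+1)} - 3^{-(r+1)}) for every 0 ≤ r ≤ 1. -/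
/-!
With `φ(t) = t (-log t)^r`, the integrand is `φ((u₁ + u₂ - 1)⁺)` and `φ(0) = 0`, so integrating
out `u₂` leaves `∫₀^{u₁} φ`. Exchanging the order of the remaining double integral gives
`∫₀¹ (1 - t) φ(t) dt = ∫₀¹ t (-log t)^r dt - ∫₀¹ t² (-log t)^r dt`, and the substitution
`t = e^{-s}` turns `∫₀¹ t^{a-1} (-log t)^r dt` into `∫₀^∞ s^r e^{-a s} ds = Γ(r+1) a^{-(r+1)}`.
-/

open MeasureTheory Real Set

theorem integral_Ioo_rpow_mul_neg_log_rpow {a r : ℝ} (ha : 0 < a) (hr : -1 < r) :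
    ∫ x in Ioo (0 : ℝ) 1, x ^ (a - 1) * (-log x) ^ r = Gamma (r + 1) * a ^ (-(r + 1)) := by
  have himage : (fun s : ℝ => exp (-s)) '' Ioi 0 = Ioo 0 1 := by
    ext x
    constructor
    · rintro ⟨s, hs, rfl⟩
      exact ⟨exp_pos _, exp_lt_one_iff.mpr (neg_neg_iff_pos.mpr hs)⟩
    · rintro ⟨hx0, hx1⟩
      exact ⟨-log x, by simpa using log_neg hx0 hx1, by simp [exp_log hx0]⟩
  have hderiv : ∀ s ∈ Ioi (0 : ℝ),
      HasDerivWithinAt (fun s : ℝ => exp (-s)) (-exp (-s)) (Ioi 0) s := fun s _ => by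
    simpa using ((hasDerivAt_neg s).exp).hasDerivWithinAt
  have hinj : InjOn (fun s : ℝ => exp (-s)) (Ioi 0) := fun s _ t _ h => by
    simpa using exp_injective h
  rw [← himage, integral_image_eq_integral_abs_deriv_smul measurableSet_Ioi hderiv hinj]
  have hintegrand : ∀ s ∈ Ioi (0 : ℝ),
      |-exp (-s)| • (exp (-s) ^ (a - 1) * (-log (exp (-s))) ^ r)
        = s ^ ((r + 1) - 1) * exp (-(a * s)) := fun s _ => by
    rw [abs_neg, abs_of_pos (exp_pos _), smul_eq_mul, log_exp, neg_neg, ← exp_mul,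
      add_sub_cancel_right, ← mul_assoc, ← exp_add]
    ring_nf
  rw [setIntegral_congr_fun measurableSet_Ioi hintegrand,
    integral_rpow_mul_exp_neg_mul_Ioi (by linarith) ha, one_div, inv_rpow ha.le,
    ← rpow_neg ha.le, mul_comm]

theorem integrableOn_Ioo_rpow_mul_neg_log_rpow {a r : ℝ} (ha : 0 < a) (hr : -1 < r) :
    IntegrableOn (fun x : ℝ => x ^ (a - 1) * (-log x) ^ r) (Ioo 0 1) :=
  .of_integral_ne_zero <| by
    rw [integral_Ioo_rpow_mul_neg_log_rpow ha hr]
    exact (mul_pos (Gamma_pos_of_pos (by linarith)) (rpow_pos_of_pos ha _)).ne'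

/-- `ζ_r(C) = ∫ fracEntropyFun r (C u) du`; the convention that the integrand vanishes where
`C u = 0` holds automatically, as `0 * _ = 0`. -/
noncomputable def fracEntropyFun (r t : ℝ) : ℝ := t * (-log t) ^ r

@[fun_prop]
theorem measurable_fracEntropyFun (r : ℝ) : Measurable (fracEntropyFun r) := by
  unfold fracEntropyFun; fun_prop

@[simp]
theorem fracEntropyFun_zero (r : ℝ) : fracEntropyFun r 0 = 0 := zero_mul _

section UnitInterval

variable {r t : ℝ}

theorem fracEntropyFun_nonneg (ht0 : 0 ≤ t) (ht1 : t ≤ 1) : 0 ≤ fracEntropyFun r t :=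
  mul_nonneg ht0 (rpow_nonneg (neg_nonneg.mpr (log_nonpos ht0 ht1)) r)

theorem fracEntropyFun_le_one (hr0 : 0 ≤ r) (hr1 : r ≤ 1) (ht0 : 0 ≤ t) (ht1 : t ≤ 1) :
    fracEntropyFun r t ≤ 1 := by
  obtain rfl | ht := ht0.eq_or_lt
  · simp
  have hlog : 0 ≤ -log t := neg_nonneg.mpr (log_nonpos ht0 ht1)
  have hlog_le : -log t ≤ t⁻¹ := by
    linarith [log_le_sub_one_of_pos (inv_pos.mpr ht), log_inv t]
  have hpow : (-log t) ^ r ≤ t⁻¹ := calc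
    (-log t) ^ r ≤ t⁻¹ ^ r := rpow_le_rpow hlog hlog_le hr0
    _ ≤ t⁻¹ ^ (1 : ℝ) := rpow_le_rpow_of_exponent_le (one_le_inv₀ ht |>.mpr ht1) hr1
    _ = t⁻¹ := rpow_one _
  calc fracEntropyFun r t ≤ t * t⁻¹ := mul_le_mul_of_nonneg_left hpow ht0
    _ = 1 := mul_inv_cancel₀ ht.ne'

end UnitInterval

theorem integrableOn_fracEntropyFun_comp {α : Type*} [MeasurableSpace α] {μ : Measure α}
    {s : Set α} {f : α → ℝ} {r : ℝ} (hr0 : 0 ≤ r) (hr1 : r ≤ 1) (hs : MeasurableSet s)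
    (hμs : μ s ≠ ⊤) (hf : Measurable f) (hfs : ∀ x ∈ s, f x ∈ Icc 0 1) :
    IntegrableOn (fun x => fracEntropyFun r (f x)) s μ := by
  refine Measure.integrableOn_of_bounded (M := 1) hμs
    ((measurable_fracEntropyFun r).comp hf).aestronglyMeasurable ?_
  refine (ae_restrict_iff' hs).mpr (.of_forall fun x hx => ?_)
  obtain ⟨h0, h1⟩ := hfs x hx
  rw [norm_of_nonneg (fracEntropyFun_nonneg h0 h1)]
  exact fracEntropyFun_le_one hr0 hr1 h0 h1

theorem integral_Ioc_integral_Ioc {h : ℝ → ℝ} {a b : ℝ} (hh : IntegrableOn h (Ioc a b)) :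
    ∫ x in Ioc a b, ∫ t in Ioc a x, h t = ∫ t in Ioc a b, (b - t) * h t := by
  set F : ℝ → ℝ → ℝ := fun x t => (Ioc a x).indicator h t
  have hF : Function.uncurry F = {p : ℝ × ℝ | a < p.2 ∧ p.2 ≤ p.1}.indicator (fun p => h p.2) := by
    ext ⟨x, t⟩
    by_cases hat : a < t <;> by_cases htx : t ≤ x <;> simp [F, indicator, hat, htx]
  have hFint : Integrable (Function.uncurry F)
      ((volume.restrict (Ioc a b)).prod (volume.restrict (Ioc a b))) := by
    rw [hF]
    exact (hh.comp_snd _).indicator ((measurableSet_lt measurable_const measurable_snd).inter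
      (measurableSet_le measurable_snd measurable_fst))
  calc ∫ x in Ioc a b, ∫ t in Ioc a x, h t
      = ∫ x in Ioc a b, ∫ t in Ioc a b, F x t := by
        refine setIntegral_congr_fun measurableSet_Ioc fun x hx => ?_
        rw [setIntegral_indicator measurableSet_Ioc, Ioc_inter_Ioc, sup_idem,
          inf_eq_right.mpr hx.2]
    _ = ∫ t in Ioc a b, ∫ x in Ioc a b, F x t := integral_integral_swap hFint
    _ = ∫ t in Ioc a b, (b - t) * h t := by
        refine setIntegral_congr_fun measurableSet_Ioc fun t ht => ?_
        have hFt : EqOn (F · t) ((Icc t b).indicator fun _ => h t) (Ioc a b) :=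
          fun x hx => by
            by_cases htx : t ≤ x <;> simp [F, indicator, ht.1, htx, hx.2]
        rw [setIntegral_congr_fun measurableSet_Ioc hFt,
          setIntegral_indicator measurableSet_Icc,
          inter_eq_right.mpr (Icc_subset_Ioc_iff ht.2 |>.mpr ⟨ht.1, le_rfl⟩),
          setIntegral_const, measureReal_def, Real.volume_Icc, smul_eq_mul,
          ENNReal.toReal_ofReal (sub_nonneg.mpr ht.2)]

theorem integral_Icc_comp_max_add_sub_one {φ : ℝ → ℝ} {x : ℝ} (hφ : φ 0 = 0)
    (hx : x ∈ Icc (0 : ℝ) 1) (hint : IntegrableOn φ (Ioc 0 x)) :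
    ∫ y in Icc (0 : ℝ) 1, φ (max (x + y - 1) 0) = ∫ t in Ioc 0 x, φ t := by
  set g : ℝ → ℝ := fun s => φ (max s 0)
  have hneg : EqOn g 0 (uIcc (x - 1) 0) := fun s hs => by
    have : s ≤ 0 := (mem_uIcc.mp hs).elim (·.2) fun h => by linarith [h.2, hx.2]
    simp [g, max_eq_right this, hφ]
  have hpos : EqOn g φ (uIcc 0 x) := fun s hs => by
    have : 0 ≤ s := (mem_uIcc.mp hs).elim (·.1) fun h => by linarith [h.1, hx.1]
    simp [g, max_eq_left this]
  have hint_neg : IntervalIntegrable g volume (x - 1) 0 :=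
    (intervalIntegrable_congr (hneg.mono Ioc_subset_Icc_self)).mpr intervalIntegrable_const
  have hint_pos : IntervalIntegrable g volume 0 x :=
    (intervalIntegrable_congr (hpos.mono Ioc_subset_Icc_self)).mpr
      ((intervalIntegrable_iff_integrableOn_Ioc_of_le hx.1).mpr hint)
  calc ∫ y in Icc (0 : ℝ) 1, g (x + y - 1)
      = ∫ y in (0 : ℝ)..1, g (y + (x - 1)) := by
        rw [integral_Icc_eq_integral_Ioc, ← intervalIntegral.integral_of_le zero_le_one]
        exact intervalIntegral.integral_congr fun y _ => by ring_nf
    _ = (∫ s in (x - 1)..0, g s) + ∫ s in (0 : ℝ)..x, g s := by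
        rw [intervalIntegral.integral_comp_add_right, zero_add, add_sub_cancel,
          intervalIntegral.integral_add_adjacent_intervals hint_neg hint_pos]
    _ = ∫ t in Ioc 0 x, φ t := by
        rw [intervalIntegral.integral_congr hneg, intervalIntegral.integral_congr hpos,
          intervalIntegral.integral_of_le hx.1]
        simp

theorem integral_Ioc_one_sub_mul_fracEntropyFun {r : ℝ} (hr : -1 < r) :
    ∫ t in Ioc (0 : ℝ) 1, (1 - t) * fracEntropyFun r t
      = Gamma (r + 1) * ((2 : ℝ) ^ (-(r + 1)) - (3 : ℝ) ^ (-(r + 1))) := by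
  have hsplit : EqOn (fun t => (1 - t) * fracEntropyFun r t)
      (fun t => t ^ ((2 : ℝ) - 1) * (-log t) ^ r - t ^ ((3 : ℝ) - 1) * (-log t) ^ r)
      (Ioo 0 1) := fun t ht => by
    norm_num [fracEntropyFun, rpow_two, rpow_one]
    ring
  rw [integral_Ioc_eq_integral_Ioo, setIntegral_congr_fun measurableSet_Ioo hsplit,
    integral_sub (integrableOn_Ioo_rpow_mul_neg_log_rpow two_pos hr)
      (integrableOn_Ioo_rpow_mul_neg_log_rpow three_pos hr),
    integral_Ioo_rpow_mul_neg_log_rpow two_pos hr,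
    integral_Ioo_rpow_mul_neg_log_rpow three_pos hr, mul_sub]

theorem setIntegral_Icc_fin_two (f : ℝ → ℝ → ℝ) (a b : Fin 2 → ℝ) :
    ∫ u in Icc a b, f (u 0) (u 1) = ∫ p in Icc (a 0) (b 0) ×ˢ Icc (a 1) (b 1), f p.1 p.2 := by
  have hpre : MeasurableEquiv.finTwoArrow ⁻¹' (Icc (a 0) (b 0) ×ˢ Icc (a 1) (b 1)) = Icc a b := by
    ext u
    simp [MeasurableEquiv.finTwoArrow, Pi.le_def, Fin.forall_fin_two]
  rw [← hpre, ← (volume_preserving_finTwoArrow ℝ).setIntegral_preimage_emb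
    MeasurableEquiv.finTwoArrow.measurableEmbedding]
  rfl

/-- Fractional CCE of the bivariate Fréchet–Hoeffding lower bound copula:
ζ_r(W) = Γ(r+1)(2^{-(r+1)} - 3^{-(r+1)}). -/
theorem stmt15 (r : ℝ) (hr0 : 0 ≤ r) (hr1 : r ≤ 1) :
    ∫ u in Set.Icc (0 : Fin 2 → ℝ) 1,
        max (u 0 + u 1 - 1) 0 * (-Real.log (max (u 0 + u 1 - 1) 0)) ^ r
      = Real.Gamma (r + 1) * ((2 : ℝ) ^ (-(r + 1)) - (3 : ℝ) ^ (-(r + 1))) := by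
  have hW : ∀ p ∈ Icc (0 : ℝ) 1 ×ˢ Icc (0 : ℝ) 1, max (p.1 + p.2 - 1) 0 ∈ Icc (0 : ℝ) 1 :=
    fun p ⟨hx, hy⟩ => ⟨le_max_right _ _, max_le (by linarith [hx.2, hy.2]) zero_le_one⟩
  have hint : IntegrableOn (fun p : ℝ × ℝ => fracEntropyFun r (max (p.1 + p.2 - 1) 0))
      (Icc 0 1 ×ˢ Icc 0 1) (volume.prod volume) :=
    integrableOn_fracEntropyFun_comp hr0 hr1 (measurableSet_Icc.prod measurableSet_Icc)
      (by rw [Measure.prod_prod]; simp) (by fun_prop) hW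
  have hint_Ioc : ∀ x ∈ Icc (0 : ℝ) 1, IntegrableOn (fracEntropyFun r) (Ioc 0 x) := fun x hx =>
    integrableOn_fracEntropyFun_comp hr0 hr1 measurableSet_Ioc measure_Ioc_lt_top.ne
      measurable_id fun t ht => ⟨ht.1.le, ht.2.trans hx.2⟩
  change ∫ u in Icc (0 : Fin 2 → ℝ) 1, fracEntropyFun r (max (u 0 + u 1 - 1) 0) = _
  rw [setIntegral_Icc_fin_two (fun x y => fracEntropyFun r (max (x + y - 1) 0))]
  simp only [Pi.zero_apply, Pi.one_apply]
  rw [Measure.volume_eq_prod, setIntegral_prod _ hint,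
    setIntegral_congr_fun measurableSet_Icc fun x hx =>
      integral_Icc_comp_max_add_sub_one (fracEntropyFun_zero r) hx (hint_Ioc x hx),
    integral_Icc_eq_integral_Ioc, integral_Ioc_integral_Ioc (hint_Ioc 1 ⟨zero_le_one, le_rfl⟩),
    integral_Ioc_one_sub_mul_fracEntropyFun (by linarith)]
end

section
/- Fractional entropy upper bound: for any k-dimensional copula C and any 0 ≤ r ≤ 1, ζ_r(C) ≤ (ζ(C))^r, where ζ(C) is the cumulative copula entropy and ζ_r(C) the fractional cumulative copula entropy. -/
open MeasureTheory Real

lemma stmt17_pointwise {x r : ℝ} (hx0 : 0 ≤ x) (hx1 : x ≤ 1) (hr1 : r ≤ 1) :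
    x * (-Real.log x) ^ r ≤ (x * (-Real.log x)) ^ r := by
  rcases eq_or_lt_of_le hx0 with h | h
  · simp only [← h, zero_mul]
    exact Real.rpow_nonneg le_rfl r
  · have hl : 0 ≤ -Real.log x := neg_nonneg.2 (Real.log_nonpos hx0 hx1)
    rw [Real.mul_rpow hx0 hl]
    have hxr : x ≤ x ^ r := by
      have := Real.rpow_le_rpow_of_exponent_ge h hx1 hr1
      rwa [Real.rpow_one] at this
    exact mul_le_mul_of_nonneg_right hxr (Real.rpow_nonneg hl r)

lemma stmt17_mul_neg_log_mem {x : ℝ} (hx0 : 0 ≤ x) (hx1 : x ≤ 1) :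
    0 ≤ x * (-Real.log x) ∧ x * (-Real.log x) ≤ 1 := by
  constructor
  · exact mul_nonneg hx0 (neg_nonneg.2 (Real.log_nonpos hx0 hx1))
  · rcases eq_or_lt_of_le hx0 with h | h
    · simp [← h]
    · have := Real.log_le_sub_one_of_pos (inv_pos.2 h)
      rw [Real.log_inv] at this
      have h2 : x * (-Real.log x) ≤ x * (x⁻¹ - 1) := by
        exact mul_le_mul_of_nonneg_left this hx0
      have h3 : x * (x⁻¹ - 1) = 1 - x := by field_simp
      nlinarith

/-- Fractional entropy upper bound: ζ_r(C) ≤ (ζ(C))^r for 0 ≤ r ≤ 1. -/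
theorem stmt17 (k : ℕ) (C : (Fin k → ℝ) → ℝ)
    (hCmeas : Measurable C)
    (hC01 : ∀ u, C u ∈ Set.Icc (0 : ℝ) 1)
    (r : ℝ) (hr0 : 0 ≤ r) (hr1 : r ≤ 1) :
    (∫ u in Set.Icc (0 : Fin k → ℝ) 1, C u * (-Real.log (C u)) ^ r)
      ≤ (-∫ u in Set.Icc (0 : Fin k → ℝ) 1, C u * Real.log (C u)) ^ r := by
  set μ := volume.restrict (Set.Icc (0 : Fin k → ℝ) 1) with hμ
  have hprob : IsProbabilityMeasure μ := by
    constructor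
    rw [hμ, Measure.restrict_apply_univ, Real.volume_Icc_pi]
    simp
  set g : (Fin k → ℝ) → ℝ := fun u => C u * (-Real.log (C u)) with hg
  have hg_meas : Measurable g := by
    exact hCmeas.mul (Real.measurable_log.comp hCmeas).neg
  have hg_bd : ∀ u, 0 ≤ g u ∧ g u ≤ 1 := fun u =>
    stmt17_mul_neg_log_mem (hC01 u).1 (hC01 u).2
  have hg_int : Integrable g μ := by
    refine Integrable.mono' (integrable_const 1) hg_meas.aestronglyMeasurable ?_
    filter_upwards with u
    rw [Real.norm_eq_abs, abs_of_nonneg (hg_bd u).1]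
    exact (hg_bd u).2
  have hgr_int : Integrable (fun u => (g u) ^ r) μ := by
    refine Integrable.mono' (integrable_const 1) ((Real.continuous_rpow_const hr0).measurable.comp hg_meas).aestronglyMeasurable ?_
    filter_upwards with u
    rw [Real.norm_eq_abs, abs_of_nonneg (Real.rpow_nonneg (hg_bd u).1 r)]
    exact Real.rpow_le_one (hg_bd u).1 (hg_bd u).2 hr0
  have hlhs_int : Integrable (fun u => C u * (-Real.log (C u)) ^ r) μ := by
    refine Integrable.mono' (integrable_const 1) ?_ ?_
    · exact (hCmeas.mul ((Real.continuous_rpow_const hr0).measurable.comp (Real.measurable_log.comp hCmeas).neg)).aestronglyMeasurable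
    · filter_upwards with u
      have h1 : 0 ≤ C u * (-Real.log (C u)) ^ r :=
        mul_nonneg (hC01 u).1
          (Real.rpow_nonneg (neg_nonneg.2 (Real.log_nonpos (hC01 u).1 (hC01 u).2)) r)
      rw [Real.norm_eq_abs, abs_of_nonneg h1]
      calc C u * (-Real.log (C u)) ^ r ≤ (g u) ^ r :=
            stmt17_pointwise (hC01 u).1 (hC01 u).2 hr1
        _ ≤ 1 := Real.rpow_le_one (hg_bd u).1 (hg_bd u).2 hr0
  have step1 : (∫ u, C u * (-Real.log (C u)) ^ r ∂μ) ≤ ∫ u, (g u) ^ r ∂μ := by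
    refine integral_mono hlhs_int hgr_int fun u => ?_
    exact stmt17_pointwise (hC01 u).1 (hC01 u).2 hr1
  have step2 : (∫ u, (g u) ^ r ∂μ) ≤ (∫ u, g u ∂μ) ^ r := by
    refine (Real.concaveOn_rpow hr0 hr1).le_map_integral ?_ isClosed_Ici ?_ hg_int hgr_int
    · exact ContinuousOn.rpow_const continuousOn_id fun x _ => Or.inr hr0
    · filter_upwards with u
      exact (hg_bd u).1
  have heq : (-∫ u, C u * Real.log (C u) ∂μ) = ∫ u, g u ∂μ := by
    rw [← integral_neg]
    congr 1
    ext u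
    ring
  calc (∫ u in Set.Icc (0 : Fin k → ℝ) 1, C u * (-Real.log (C u)) ^ r)
      ≤ ∫ u, (g u) ^ r ∂μ := step1
    _ ≤ (∫ u, g u ∂μ) ^ r := step2
    _ = (-∫ u in Set.Icc (0 : Fin k → ℝ) 1, C u * Real.log (C u)) ^ r := by rw [heq]
end
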